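/- arXiv:math/0602626 — 9 statements merged into one kernel-verified Lean document; each statement's English description precedes it below -/
import Mathlib

section
/- Let A be a discrete valuation ring with uniformizer t, and let R be an A-algebra that is torsion-free as an A-module. If the quotient ring R/tR is reduced, then R is integrally closed in the localization R[t⁻¹]: every element of R[t⁻¹] that is integral over R lies in the image of the localization map R → R[t⁻¹]. (Lemma 2.2(1) of the paper.) -/
/-!
Write `x = r / τ ^ k`. If `k > 0` and `x` is a root of a monic `p`, then `τ` divides `r ^ deg p`
(clear denominators in `p(x) = 0`, using that `R → R[τ⁻¹]` is injective); since `(τ)` is a radical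
ideal, `τ ∣ r`, so `x = r' / τ ^ (k - 1)`. Descending on `k` puts `x` in `R`.
-/

open Polynomial

theorem algebraMap_mem_nonZeroDivisors_of_ne_zero {A R : Type*} [CommRing A] [CommRing R]
    [Algebra A R] [NoZeroSMulDivisors A R] {a : A} (ha : a ≠ 0) :
    algebraMap A R a ∈ nonZeroDivisors R :=
  mem_nonZeroDivisors_iff_right.mpr fun r hr =>
    (eq_zero_or_eq_zero_of_smul_eq_zero (by rwa [Algebra.smul_def, mul_comm])).resolve_left ha

namespace IsLocalization.Away

variable {R S : Type*} [CommRing R] [CommRing S] [Algebra R S] {τ : R} [IsLocalization.Away τ S]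

theorem exists_pow_mul_eq_algebraMap_of_pow_succ_mul_eq (hτ : τ ∈ nonZeroDivisors R)
    (hrad : (Ideal.span {τ}).IsRadical) {x : S} (hx : IsIntegral R x) {k : ℕ} {r : R}
    (h : algebraMap R S (τ ^ (k + 1)) * x = algebraMap R S r) :
    ∃ r' : R, algebraMap R S (τ ^ k) * x = algebraMap R S r' := by
  obtain ⟨p, hp, hpx⟩ := hx
  have hinj : Function.Injective (algebraMap R S) :=
    IsLocalization.injective S (Submonoid.powers_le.mpr hτ)
  have hdvd : τ ∣ r ^ p.natDegree :=
    (dvd_pow_self τ k.succ_ne_zero).trans (dvd_pow_natDegree_of_eval₂_eq_zero hinj hp _ r x hpx h)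
  obtain ⟨r', rfl⟩ := Ideal.mem_span_singleton.mp (hrad ⟨_, Ideal.mem_span_singleton.mpr hdvd⟩)
  refine ⟨r', (algebraMap_isUnit τ).mul_left_cancel ?_⟩
  rw [← mul_assoc, ← map_mul, ← pow_succ', h, map_mul]

theorem isIntegrallyClosedIn_of_isRadical (hτ : τ ∈ nonZeroDivisors R)
    (hrad : (Ideal.span {τ}).IsRadical) : IsIntegrallyClosedIn R S := by
  refine isIntegrallyClosedIn_iff.mpr
    ⟨IsLocalization.injective S (Submonoid.powers_le.mpr hτ), fun {x} hx => ?_⟩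
  obtain ⟨⟨r, _, k, rfl⟩, h⟩ := IsLocalization.surj (Submonoid.powers τ) x
  rw [mul_comm] at h
  induction k generalizing r with
  | zero => exact ⟨r, by simpa using h.symm⟩
  | succ k ih =>
    obtain ⟨r', h'⟩ := exists_pow_mul_eq_algebraMap_of_pow_succ_mul_eq hτ hrad hx h
    exact ih r' h'

end IsLocalization.Away

theorem reduced_special_fiber_implies_integrally_closed_general
    (A R : Type*) [CommRing A]
    [CommRing R] [Algebra A R] [NoZeroSMulDivisors A R]
    (t : A) (ht : Irreducible t)
    (hred : IsReduced (R ⧸ Ideal.span {algebraMap A R t})) :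
    ∀ x : Localization.Away (algebraMap A R t), IsIntegral R x →
      x ∈ (algebraMap R (Localization.Away (algebraMap A R t))).range := by
  have := IsLocalization.Away.isIntegrallyClosedIn_of_isRadical
    (S := Localization.Away (algebraMap A R t))
    (algebraMap_mem_nonZeroDivisors_of_ne_zero ht.ne_zero)
    ((Ideal.isRadical_iff_quotient_reduced _).mpr hred)
  exact fun x hx => IsIntegrallyClosedIn.isIntegral_iff.mp hx

/-- Let `A` be a DVR with uniformizer `t` and `R` an `A`-algebra that is torsion-free
as an `A`-module. If `R / tR` is reduced, then `R` is integrally closed in the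
localization `R[t⁻¹]`: every element of `R[t⁻¹]` integral over `R` lies in the image
of the localization map `R → R[t⁻¹]`. -/
theorem reduced_special_fiber_implies_integrally_closed
    (A R : Type*) [CommRing A] [IsDomain A] [IsDiscreteValuationRing A]
    [CommRing R] [Algebra A R] [NoZeroSMulDivisors A R]
    (t : A) (ht : Irreducible t)
    (hred : IsReduced (R ⧸ Ideal.span {algebraMap A R t})) :
    ∀ x : Localization.Away (algebraMap A R t), IsIntegral R x →
      x ∈ (algebraMap R (Localization.Away (algebraMap A R t))).range :=
  reduced_special_fiber_implies_integrally_closed_general A R t ht hred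
end

section
/- Let A and A' be discrete valuation rings with uniformizers t and t' respectively, and let φ : A → A' be a ring homomorphism with φ(t) = c·(t')ⁿ for some unit c of A' and some integer n ≥ 1. Let R be an A-algebra that is torsion-free as an A-module, let R' = A' ⊗_A R, and suppose there is x ∈ R with x ∉ tR and xⁿ ∈ tR. Then the image x' of x in R' does not lie in t'R', while the element x'/t' of the localization R'[t'⁻¹] is integral over R' and does not lie in the image of R'. In particular, R' is not integrally closed in R'[t'⁻¹]. (The base-change step of Lemma 2.2(2) of the paper.) -/
/-!
Flatness of `R` over the DVR `A` makes `t'` a non-zero-divisor on `R' = A' ⊗[A] R`, so `R'`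
embeds in `R'[t'⁻¹]`. Writing `xⁿ = t r` gives `x'ⁿ = t'ⁿ (c r')`, so `x'/t'` is a root of the
monic polynomial `Xⁿ - c r'`; if it came from `R'`, then `x'` would lie in `t'R'`. That is ruled
out by a retraction `g : A'/t' → A/t` of the residue field extension: `a' ⊗ r ↦ g(a') • (r mod t)`
is a well-defined map `R' → R/tR` that kills `t'R'` and sends `x'` to `x mod t ≠ 0`.
-/

open scoped TensorProduct nonZeroDivisors

section Localization

variable {S L : Type*} [CommRing S] [CommRing L] [Algebra S L] {M : Submonoid S}
  [IsLocalization M L]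

theorem IsLocalization.isIntegral_mk'_of_pow_dvd_pow {y : S} {s : M} {n : ℕ} (hn : n ≠ 0)
    (h : (s : S) ^ n ∣ y ^ n) : IsIntegral S (IsLocalization.mk' L y s) := by
  obtain ⟨u, hu⟩ := h
  refine IsIntegral.of_pow (Nat.pos_of_ne_zero hn) ?_
  rw [← IsLocalization.mk'_pow, hu, ← SubmonoidClass.coe_pow, IsLocalization.mk'_mul_cancel_left]
  exact isIntegral_algebraMap

theorem IsLocalization.mk'_notMem_range_of_notMem_span (hM : M ≤ S⁰) {y : S} {s : M}
    (h : y ∉ Ideal.span {(s : S)}) : IsLocalization.mk' L y s ∉ (algebraMap S L).range := by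
  rintro ⟨z, hz⟩
  refine h (Ideal.mem_span_singleton'.mpr ⟨z, IsLocalization.injective L hM ?_⟩)
  rw [map_mul, ← IsLocalization.mk'_eq_iff_eq_mul.mp hz.symm]

end Localization

theorem Ideal.liesOver_of_le_under {A A' : Type*} [CommRing A] [CommRing A'] [Algebra A A']
    {p : Ideal A} [hp : p.IsMaximal] {P : Ideal A'} (hP : P ≠ ⊤) (h : p ≤ P.under A) :
    P.LiesOver p :=
  ⟨hp.eq_of_le (Ideal.comap_ne_top _ hP) h⟩

section TensorProduct

variable {A A' R : Type*} [CommRing A] [CommRing A'] [CommRing R] [Algebra A A'] [Algebra A R]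

theorem Algebra.TensorProduct.algebraMap_mem_nonZeroDivisors [Module.Flat A R] {a : A'}
    (ha : a ∈ A'⁰) : algebraMap A' (A' ⊗[A] R) a ∈ (A' ⊗[A] R)⁰ :=
  isRegular_iff_mem_nonZeroDivisors.mp <| (Commute.isRegular_iff (Commute.all _)).mpr
    (IsSMulRegular.of_flat (Module.Flat.isSMulRegular_of_nonZeroDivisors ha)).isLeftRegular

theorem Ideal.mem_map_of_one_tmul_mem_map (p : Ideal A) [p.IsMaximal] (P : Ideal A')
    [P.LiesOver p] {x : R} (hx : (1 : A') ⊗ₜ[A] x ∈ P.map (algebraMap A' (A' ⊗[A] R))) :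
    x ∈ p.map (algebraMap A R) := by
  let : Field (A ⧸ p) := Ideal.Quotient.field p
  obtain ⟨g, hg⟩ := LinearMap.exists_leftInverse_of_injective
    (Algebra.linearMap (A ⧸ p) (A' ⧸ P))
    (LinearMap.ker_eq_bot.mpr (FaithfulSMul.algebraMap_injective _ _))
  let π : A' ⊗[A] R →ₐ[A] (A' ⧸ P) ⊗[A] R :=
    Algebra.TensorProduct.map (Ideal.Quotient.mkₐ A P) (AlgHom.id A R)
  let σ : (A' ⧸ P) ⊗[A] R →ₗ[A] R ⧸ (p • ⊤ : Submodule A R) :=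
    TensorProduct.quotTensorEquivQuotSMul R p ∘ₗ (g.restrictScalars A).rTensor R
  have hπ : π ((1 : A') ⊗ₜ x) = 0 := by
    refine (Ideal.map_le_iff_le_comap.mpr (fun a ha ↦ ?_) hx : _ ∈ RingHom.ker π)
    simp [π, Ideal.Quotient.eq_zero_iff_mem.mpr ha]
  have hg1 : g 1 = 1 := by simpa using LinearMap.congr_fun hg 1
  have hσ : σ (π ((1 : A') ⊗ₜ x)) = Submodule.Quotient.mk x := by
    simp [π, σ, hg1]
  rw [hπ, map_zero, eq_comm, Submodule.Quotient.mk_eq_zero, Ideal.smul_top_eq_map] at hσ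
  exact hσ

end TensorProduct

/-- Let `A`, `A'` be DVRs with uniformizers `t`, `t'`, and `A → A'` a ring homomorphism
sending `t` to `c * t' ^ n` with `c` a unit and `n ≥ 1`.  Let `R` be a torsion-free
`A`-algebra, `R' = A' ⊗[A] R`, and suppose `x ∈ R` satisfies `x ∉ tR` but `x ^ n ∈ tR`.
Then the image `x'` of `x` in `R'` does not lie in `t'R'`, while `x'/t' ∈ R'[t'⁻¹]` is
integral over `R'` and does not lie in the image of `R'`. -/
theorem base_change_not_integrally_closed
    (A A' R : Type*) [CommRing A] [IsDomain A] [IsDiscreteValuationRing A]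
    [CommRing A'] [IsDomain A'] [IsDiscreteValuationRing A']
    [CommRing R] [Algebra A R] [NoZeroSMulDivisors A R] [Algebra A A']
    (t : A) (ht : Irreducible t) (t' : A') (ht' : Irreducible t')
    (c : A'ˣ) (n : ℕ) (hn : 1 ≤ n) (hφ : algebraMap A A' t = (c : A') * t' ^ n)
    (x : R) (hx : x ∉ Ideal.span {algebraMap A R t})
    (hxn : x ^ n ∈ Ideal.span {algebraMap A R t}) :
    (Algebra.TensorProduct.includeRight x : A' ⊗[A] R) ∉
        Ideal.span {algebraMap A' (A' ⊗[A] R) t'} ∧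
    IsIntegral (A' ⊗[A] R)
      (IsLocalization.mk' (Localization.Away (algebraMap A' (A' ⊗[A] R) t'))
        (Algebra.TensorProduct.includeRight x : A' ⊗[A] R)
        (⟨algebraMap A' (A' ⊗[A] R) t', 1, pow_one _⟩ :
          Submonoid.powers (algebraMap A' (A' ⊗[A] R) t'))) ∧
    (IsLocalization.mk' (Localization.Away (algebraMap A' (A' ⊗[A] R) t'))
        (Algebra.TensorProduct.includeRight x : A' ⊗[A] R)
        (⟨algebraMap A' (A' ⊗[A] R) t', 1, pow_one _⟩ :
          Submonoid.powers (algebraMap A' (A' ⊗[A] R) t'))) ∉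
      (algebraMap (A' ⊗[A] R) (Localization.Away (algebraMap A' (A' ⊗[A] R) t'))).range := by
  have : (Ideal.span {t}).IsMaximal := ht.maximalIdeal_eq ▸ IsLocalRing.maximalIdeal.isMaximal A
  have : (Ideal.span {t'}).LiesOver (Ideal.span {t}) :=
    Ideal.liesOver_of_le_under (Ideal.span_singleton_ne_top ht'.not_isUnit) <|
      Ideal.span_le.mpr <| Set.singleton_subset_iff.mpr <| Ideal.mem_span_singleton.mpr <|
        hφ ▸ (dvd_pow_self t' (by omega)).mul_left _
  have hnotMem : (Algebra.TensorProduct.includeRight x : A' ⊗[A] R) ∉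
      Ideal.span {algebraMap A' (A' ⊗[A] R) t'} := fun h ↦ hx <| by
    simpa only [Ideal.map_span, Set.image_singleton] using
      Ideal.mem_map_of_one_tmul_mem_map (R := R) (Ideal.span {t}) (Ideal.span {t'})
        (by simpa only [Ideal.map_span, Set.image_singleton,
          Algebra.TensorProduct.includeRight_apply] using h)
  have hdvd : algebraMap A' (A' ⊗[A] R) t' ^ n ∣ Algebra.TensorProduct.includeRight x ^ n := by
    have h := map_dvd (Algebra.TensorProduct.includeRight (R := A) (A := A') (B := R))
      (Ideal.mem_span_singleton.mp hxn)
    rw [AlgHom.commutes, IsScalarTower.algebraMap_apply A A', hφ, map_mul, map_pow,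
      map_pow] at h
    exact (dvd_mul_left _ _).trans h
  have hreg : Submonoid.powers (algebraMap A' (A' ⊗[A] R) t') ≤ (A' ⊗[A] R)⁰ :=
    Submonoid.powers_le.mpr <| Algebra.TensorProduct.algebraMap_mem_nonZeroDivisors <|
      mem_nonZeroDivisors_of_ne_zero ht'.ne_zero
  exact ⟨hnotMem, IsLocalization.isIntegral_mk'_of_pow_dvd_pow (by omega) hdvd,
    IsLocalization.mk'_notMem_range_of_notMem_span hreg hnotMem⟩
end

section
/- Let A be a discrete valuation ring with uniformizer t, and let φ : A[X₀,…,Xₙ] → R be an A-algebra homomorphism, where R is an A-algebra that is torsion-free as an A-module, R is finitely generated as a module over the image subring φ(A[X₀,…,Xₙ]), and the quotient ring R/tR is reduced. Then, inside the localization R[t⁻¹], the integral closure of (the image of) the subring φ(A[X₀,…,Xₙ]) equals the image of R. In particular, R is uniquely determined by its generic fiber: it is the integral closure of the image of A[X₀,…,Xₙ] in R ⊗_A Frac(A). (Ring-theoretic form of Corollary 2.3, the separatedness of the functor of branchvarieties.) -/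
/-!
If `y = r / tᵏ⁺¹ ∈ R[t⁻¹]` is integral over `R` with a monic equation of degree `d`, then `r` is a
root of the scaled polynomial, which is `Xᵈ` modulo `t`; so `rᵈ ∈ tR`, and since `R/tR` is reduced,
`t ∣ r`, which lowers `k`. Hence `R` is integrally closed in `R[t⁻¹]`. As `R` is integral over the
image of `φ`, being integral over that image is the same as being integral over `R`. Finally, over
a DVR every nonzero element is a unit times a power of `t`, so `Frac(A) = A[t⁻¹]` and
`R ⊗[A] Frac(A) = R[t⁻¹]`.
-/

open Polynomial

theorem Polynomial.Monic.map_scaleRoots_eq_X_pow {R : Type*} [CommRing R] {p : R[X]} (hp : p.Monic)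
    (s : R) : (p.scaleRoots s).map (Ideal.Quotient.mk (Ideal.span {s})) = X ^ p.natDegree := by
  ext i
  rw [coeff_map, coeff_scaleRoots, coeff_X_pow]
  rcases lt_trichotomy i p.natDegree with hi | rfl | hi
  · rw [if_neg hi.ne, Ideal.Quotient.eq_zero_iff_mem, Ideal.mem_span_singleton]
    exact Dvd.dvd.mul_left (dvd_pow_self s (Nat.sub_ne_zero_of_lt hi)) _
  · simp [hp.coeff_natDegree]
  · simp [hi.ne', coeff_eq_zero_of_natDegree_lt hi]

theorem dvd_of_isIntegral_of_algebraMap_mul_eq {R S : Type*} [CommRing R] [CommRing S]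
    [Algebra R S] (hinj : Function.Injective (algebraMap R S)) {s r : R}
    (hred : IsReduced (R ⧸ Ideal.span {s})) {y : S} (hy : IsIntegral R y)
    (hsy : algebraMap R S s * y = algebraMap R S r) : s ∣ r := by
  obtain ⟨p, hp, hpy⟩ := hy
  have hroot : (p.scaleRoots s).eval r = 0 := hinj <| by
    rw [← eval₂_at_apply, ← hsy, scaleRoots_eval₂_eq_zero _ hpy, map_zero]
  have hnil : Ideal.Quotient.mk (Ideal.span {s}) r ^ p.natDegree = 0 := by
    rw [← eval_X_pow (R := R ⧸ _), ← hp.map_scaleRoots_eq_X_pow s, eval_map, eval₂_at_apply,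
      hroot, map_zero]
  rw [← Ideal.mem_span_singleton, ← Ideal.Quotient.eq_zero_iff_mem]
  exact IsNilpotent.eq_zero ⟨_, hnil⟩

theorem isIntegrallyClosedIn_of_isLocalization_away {R S : Type*} [CommRing R] [CommRing S]
    [Algebra R S] {s : R} [IsLocalization.Away s S] (hs : s ∈ nonZeroDivisors R)
    (hred : IsReduced (R ⧸ Ideal.span {s})) : IsIntegrallyClosedIn R S := by
  have hinj : Function.Injective (algebraMap R S) :=
    IsLocalization.injective S (Submonoid.powers_le.mpr hs)
  refine isIntegrallyClosedIn_iff.mpr ⟨hinj, fun {y} hy => ?_⟩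
  obtain ⟨⟨r, _, k, rfl⟩, hr⟩ := IsLocalization.surj (Submonoid.powers s) y
  induction k generalizing r with
  | zero => exact ⟨r, by simpa using hr.symm⟩
  | succ k ih =>
    have hsy : algebraMap R S s * (y * algebraMap R S (s ^ k)) = algebraMap R S r := by
      rw [← hr, map_pow, map_pow]; ring
    obtain ⟨r', rfl⟩ := dvd_of_isIntegral_of_algebraMap_mul_eq hinj hred
      (hy.mul isIntegral_algebraMap) hsy
    rw [map_mul] at hsy
    exact ih r' ((IsLocalization.Away.algebraMap_isUnit s).mul_left_cancel hsy)

theorem Subalgebra.isIntegral_map_iff_of_isIntegral {A R S : Type*} [CommRing A] [CommRing R]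
    [CommRing S] [Algebra A R] [Algebra A S] [Algebra R S] [IsScalarTower A R S]
    (B : Subalgebra A R) [Algebra.IsIntegral B R] (hinj : Function.Injective (algebraMap R S))
    (y : S) : IsIntegral (B.map (IsScalarTower.toAlgHom A R S)) y ↔ IsIntegral R y :=
  (RingEquiv.isIntegral_iff (B.equivMapOfInjective _ hinj).toRingEquiv rfl y).symm.trans
    ⟨fun h => h.tower_top, isIntegral_trans y⟩

theorem IsDiscreteValuationRing.isLocalization_away {A K : Type*} [CommRing A] [IsDomain A]
    [IsDiscreteValuationRing A] [CommRing K] [Algebra A K] [IsFractionRing A K] {t : A}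
    (ht : Irreducible t) : IsLocalization.Away t K :=
  (IsLocalization.iff_of_le_of_exists_dvd _ (nonZeroDivisors A)
    (powers_le_nonZeroDivisors_of_noZeroDivisors ht.ne_zero) fun a ha =>
      let ⟨k, u, hu⟩ := eq_unit_mul_pow_irreducible (nonZeroDivisors.ne_zero ha) ht
      ⟨t ^ k, ⟨k, rfl⟩, ⟨↑u⁻¹, by rw [hu, mul_comm, ← mul_assoc, Units.inv_mul, one_mul]⟩⟩).mpr
    inferInstance

theorem Subalgebra.isIntegral_map_iff_mem_range {A R S : Type*} [CommRing A] [CommRing R]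
    [CommRing S] [Algebra A R] [Algebra A S] [Algebra R S] [IsScalarTower A R S]
    (B : Subalgebra A R) [Algebra.IsIntegral B R] {s : R} [IsLocalization.Away s S]
    (hs : s ∈ nonZeroDivisors R) (hred : IsReduced (R ⧸ Ideal.span {s})) (y : S) :
    IsIntegral (B.map (IsScalarTower.toAlgHom A R S)) y ↔ y ∈ (algebraMap R S).range := by
  have := isIntegrallyClosedIn_of_isLocalization_away (S := S) hs hred
  rw [B.isIntegral_map_iff_of_isIntegral (IsIntegralClosure.algebraMap_injective R R S),
    IsIntegralClosure.isIntegral_iff (A := R), RingHom.mem_range]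

open scoped TensorProduct

/-- Let `A` be a DVR with uniformizer `t` and `φ : A[X₀,…,Xₙ] → R` an `A`-algebra
homomorphism, where `R` is torsion-free over `A`, finite as a module over the image of
`φ`, and `R/tR` is reduced.  Then in `R[t⁻¹]` the integral closure of the image of
`φ(A[X₀,…,Xₙ])` equals the image of `R`; in particular `R` is the integral closure of
the image of `A[X₀,…,Xₙ]` in `R ⊗[A] Frac(A)`. -/
theorem branch_separatedness
    (A R : Type*) [CommRing A] [IsDomain A] [IsDiscreteValuationRing A]
    [CommRing R] [Algebra A R] [NoZeroSMulDivisors A R]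
    (t : A) (ht : Irreducible t) (n : ℕ)
    (φ : MvPolynomial (Fin (n + 1)) A →ₐ[A] R)
    (hfin : Module.Finite ↥φ.range R)
    (hred : IsReduced (R ⧸ Ideal.span {algebraMap A R t})) :
    (∀ y : Localization.Away (algebraMap A R t),
        IsIntegral
          ↥((IsScalarTower.toAlgHom A R (Localization.Away (algebraMap A R t))).comp φ).range
          y ↔
        y ∈ (algebraMap R (Localization.Away (algebraMap A R t))).range) ∧
    (∀ z : R ⊗[A] FractionRing A,
        IsIntegral
          ↥((Algebra.TensorProduct.includeLeft :
              R →ₐ[A] R ⊗[A] FractionRing A).comp φ).range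
          z ↔
        z ∈ (Algebra.TensorProduct.includeLeft :
              R →ₐ[A] R ⊗[A] FractionRing A).range) := by
  have hs : algebraMap A R t ∈ nonZeroDivisors R :=
    mem_nonZeroDivisors_iff_right.mpr fun r hr =>
      (smul_eq_zero.mp (by rwa [Algebra.smul_def, mul_comm])).resolve_left ht.ne_zero
  have : IsLocalization.Away t (FractionRing A) := IsDiscreteValuationRing.isLocalization_away ht
  refine ⟨fun y => ?_, fun z => ?_⟩
  · rw [AlgHom.range_comp]
    exact φ.range.isIntegral_map_iff_mem_range hs hred y
  · rw [AlgHom.range_comp]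
    -- `R ⊗[A] Frac(A)` is `R[t⁻¹]` by the instance `IsLocalization.Away.tensor`, and
    -- `includeLeft` is definitionally its algebra map
    exact φ.range.isIntegral_map_iff_mem_range hs hred z
end

section
/- Let R be a Noetherian commutative ring whose integral closure in its total ring of fractions is finite as an R-module, let t ∈ R be a non-zero-divisor, and assume that R is integrally closed in the localization R[t⁻¹]. Then the ring R/(t) has no embedded primes: every associated prime of the R-module R/(t) is a minimal prime among the prime ideals of R containing t. (Lemma 2.5 of the paper: R/(t) satisfies Serre's condition S1.) -/
/-!
Write `p = ((t) : x)` with `x ∉ (t)`, so that `(x/t) • p ⊆ R` inside `R[t⁻¹]`.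
If `(x/t) • p ⊆ p`, then `t • (x/t)ⁿ ∈ p ⊆ R` for all `n`, so `x/t` is almost integral, hence
integral since `R` is Noetherian, hence lies in `R`: impossible. Otherwise there are `a ∈ p`
and `b ∉ p` with `a x = t b`, and then `b • p ⊆ (a)`, i.e. `p R_p = a R_p`. A prime
`t ∈ q ⊆ p` either contains `a`, and then equals `p`, or satisfies `q R_p = a • q R_p`, and then
`q R_p = 0` by Nakayama, which is impossible since `t ∈ q` is a non-zero-divisor.
-/

open scoped nonZeroDivisors

section

variable {R : Type*} [CommRing R]

lemma exists_forall_mem_iff_dvd_mul_of_mem_associatedPrimes [IsNoetherianRing R]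
    {p : Ideal R} {t : R} (hp : p ∈ associatedPrimes R (R ⧸ Ideal.span {t})) :
    ∃ x : R, ∀ c, c ∈ p ↔ t ∣ c * x := by
  obtain ⟨-, m, hm⟩ := isAssociatedPrime_iff.mp hp
  obtain ⟨x, rfl⟩ := Ideal.Quotient.mk_surjective m
  refine ⟨x, fun c => ?_⟩
  rw [hm, Submodule.mem_colon_singleton, Submodule.mem_bot, Algebra.smul_def,
    Ideal.Quotient.algebraMap_eq, ← map_mul, Ideal.Quotient.eq_zero_iff_mem,
    Ideal.mem_span_singleton]

lemma isIntegral_of_forall_mul_mem_map [IsNoetherianRing R] {S : Type*} [CommRing S]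
    [Algebra R S] (hS : R⁰ ≤ S⁰.comap (algebraMap R S)) {I : Ideal R} {r : R} (hrI : r ∈ I)
    (hr : r ∈ R⁰) {y : S} (hy : ∀ c ∈ I, ∃ d ∈ I, y * algebraMap R S c = algebraMap R S d) :
    IsIntegral R y := by
  have hpow : ∀ n : ℕ, ∀ c ∈ I, ∃ d ∈ I, y ^ n * algebraMap R S c = algebraMap R S d := by
    intro n
    induction n with
    | zero => exact fun c hc => ⟨c, hc, by rw [pow_zero, one_mul]⟩
    | succ n ih =>
      intro c hc
      obtain ⟨d, hd, hyd⟩ := hy c hc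
      obtain ⟨e, he, hye⟩ := ih d hd
      exact ⟨e, he, by rw [pow_succ, mul_assoc, hyd, hye]⟩
  refine IsAlmostIntegral.isIntegral_of_nonZeroDivisors_le_comap ⟨r, hr, fun n => ?_⟩ hS
  obtain ⟨d, -, hd⟩ := hpow n r hrI
  exact ⟨d, by rw [hd.symm, Algebra.smul_def, mul_comm]⟩

lemma dvd_of_forall_mul_eq_mul_mem [IsNoetherianRing R] {t x : R} (ht : t ∈ R⁰)
    (hic : ∀ y : Localization.Away t, IsIntegral R y →
      y ∈ (algebraMap R (Localization.Away t)).range)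
    {I : Ideal R} (htI : t ∈ I) (hI : ∀ c ∈ I, ∃ d ∈ I, c * x = t * d) : t ∣ x := by
  set f := algebraMap R (Localization.Away t)
  set y := IsLocalization.mk' (Localization.Away t) x
    (⟨t, Submonoid.mem_powers t⟩ : Submonoid.powers t)
  have hyt : y * f t = f x := IsLocalization.mk'_spec _ x _
  have hy : ∀ c ∈ I, ∃ d ∈ I, y * f c = f d := by
    intro c hc
    obtain ⟨d, hd, hcd⟩ := hI c hc
    refine ⟨d, hd, (IsLocalization.Away.algebraMap_isUnit t).mul_left_cancel ?_⟩
    rw [← mul_assoc, mul_comm (f t) y, hyt, ← map_mul, ← map_mul, mul_comm, hcd]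
  obtain ⟨r, hr⟩ := hic y (isIntegral_of_forall_mul_mem_map
    (IsLocalization.nonZeroDivisors_le_comap (.powers t) _) htI ht hy)
  refine ⟨r, IsLocalization.injective (Localization.Away t) (Submonoid.powers_le.mpr ht) ?_⟩
  rw [← hyt, ← hr, map_mul, mul_comm]

lemma Ideal.map_algebraMap_atPrime_eq_bot_of_forall_mul_eq {p q : Ideal R} [p.IsPrime]
    (hq : q.FG) {a b : R} (ha : a ∈ p) (hb : b ∉ p)
    (hab : ∀ z ∈ q, ∃ w ∈ q, z * b = a * w) :
    q.map (algebraMap R (Localization.AtPrime p)) = ⊥ := by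
  set g := algebraMap R (Localization.AtPrime p)
  set m := IsLocalRing.maximalIdeal (Localization.AtPrime p)
  have hbu : IsUnit (g b) := IsLocalization.map_units _ (⟨b, hb⟩ : p.primeCompl)
  have hga : g a ∈ m := (IsLocalization.AtPrime.to_map_mem_maximal_iff _ p a).mpr ha
  refine Submodule.eq_bot_of_le_smul_of_le_jacobson_bot m _ (hq.map g) ?_
    (IsLocalRing.maximalIdeal_le_jacobson ⊥)
  refine Ideal.map_le_iff_le_comap.mpr fun z hz => ?_
  obtain ⟨w, hw, hzw⟩ := hab z hz
  have hgz : g z = g a * (g w * ↑hbu.unit⁻¹) := by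
    rw [← mul_assoc, ← map_mul, ← hzw, map_mul, mul_assoc, hbu.mul_val_inv, mul_one]
  rw [Ideal.mem_comap, hgz, ← mul_assoc]
  exact Ideal.mul_mem_right _ _ (Submodule.smul_mem_smul hga (Ideal.mem_map_of_mem g hw))

lemma mem_minimalPrimes_span_singleton_of_forall_mul_eq [IsNoetherianRing R] {p : Ideal R}
    [hp : p.IsPrime] {t a b : R} (ht : t ∈ R⁰) (htp : t ∈ p) (ha : a ∈ p) (hb : b ∉ p)
    (hab : ∀ c ∈ p, ∃ e, c * b = a * e) : p ∈ (Ideal.span {t}).minimalPrimes := by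
  refine ⟨⟨hp, (Ideal.span_singleton_le_iff_mem p).mpr htp⟩, ?_⟩
  rintro q ⟨hq, htq⟩ hqp
  have htq : t ∈ q := (Ideal.span_singleton_le_iff_mem q).mp htq
  by_cases haq : a ∈ q
  · intro c hc
    obtain ⟨e, he⟩ := hab c hc
    have hcb : c * b ∈ q := he ▸ q.mul_mem_right e haq
    exact (hq.mem_or_mem hcb).resolve_right fun hbq => hb (hqp hbq)
  · have hqab : ∀ z ∈ q, ∃ w ∈ q, z * b = a * w := by
      intro z hz
      obtain ⟨w, hw⟩ := hab z (hqp hz)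
      have haw : a * w ∈ q := hw ▸ q.mul_mem_right b hz
      exact ⟨w, (hq.mem_or_mem haw).resolve_left haq, hw⟩
    have hbot := Ideal.map_algebraMap_atPrime_eq_bot_of_forall_mul_eq
      (IsNoetherian.noetherian q) ha hb hqab
    have hgt : algebraMap R (Localization.AtPrime p) t = 0 := by
      rw [← Ideal.mem_bot, ← hbot]
      exact Ideal.mem_map_of_mem _ htq
    exact absurd hgt (nonZeroDivisors.ne_zero
      (IsLocalization.nonZeroDivisors_le_comap p.primeCompl _ ht))

end

theorem no_embedded_primes_of_integrally_closed_general
    (R : Type*) [CommRing R] [IsNoetherianRing R]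
    (t : R) (ht : t ∈ nonZeroDivisors R)
    (hic : ∀ x : Localization.Away t, IsIntegral R x →
      x ∈ (algebraMap R (Localization.Away t)).range) :
    ∀ p ∈ associatedPrimes R (R ⧸ Ideal.span {t}), p ∈ (Ideal.span {t}).minimalPrimes := by
  intro p hp
  have hprime : p.IsPrime := hp.isPrime
  obtain ⟨x, hx⟩ := exists_forall_mem_iff_dvd_mul_of_mem_associatedPrimes hp
  have htp : t ∈ p := (hx t).mpr (dvd_mul_right t x)
  have hnx : ¬ t ∣ x := fun h => hprime.ne_top (p.eq_top_iff_one.mpr ((hx 1).mpr (by simpa)))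
  by_cases hcase : ∀ c ∈ p, ∀ d, c * x = t * d → d ∈ p
  · refine absurd (dvd_of_forall_mul_eq_mul_mem ht hic htp fun c hc => ?_) hnx
    obtain ⟨d, hd⟩ := (hx c).mp hc
    exact ⟨d, hcase c hc d hd, hd⟩
  · push Not at hcase
    obtain ⟨a, ha, b, hab, hb⟩ := hcase
    refine mem_minimalPrimes_span_singleton_of_forall_mul_eq ht htp ha hb fun c hc => ?_
    obtain ⟨d, hd⟩ := (hx c).mp hc
    exact ⟨d, (mul_cancel_left_mem_nonZeroDivisors ht).mp (by linear_combination a * hd - c * hab)⟩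

/-- Let `R` be a Noetherian commutative ring whose integral closure in its total ring
of fractions is finite as an `R`-module, let `t ∈ R` be a non-zero-divisor, and assume
`R` is integrally closed in `R[t⁻¹]`.  Then `R/(t)` has no embedded primes: every
associated prime of `R/(t)` is minimal among primes containing `t`. -/
theorem no_embedded_primes_of_integrally_closed
    (R : Type*) [CommRing R] [IsNoetherianRing R]
    (hfin : Module.Finite R (integralClosure R (FractionRing R)))
    (t : R) (ht : t ∈ nonZeroDivisors R)
    (hic : ∀ x : Localization.Away t, IsIntegral R x →
      x ∈ (algebraMap R (Localization.Away t)).range) :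
    ∀ p ∈ associatedPrimes R (R ⧸ Ideal.span {t}), p ∈ (Ideal.span {t}).minimalPrimes :=
  no_embedded_primes_of_integrally_closed_general R t ht hic
end

section
/- Let R be a reduced Noetherian commutative ring whose integral closure in its total ring of fractions is finite as an R-module, let t ∈ R be a non-zero-divisor, assume R is integrally closed in the localization R[t⁻¹], and assume moreover that for every prime ideal p of R minimal among primes containing t, the localization of R/(t) at p is a field (i.e., Spec R/(t) is generically regular). Then the ring R/(t) is reduced. (The second assertion of Lemma 2.5 of the paper.) -/
/-!
If `R/(t)` is not reduced, pick a nonzero nilpotent `x̄ ∈ R/(t)` whose annihilator is prime, and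
let `P = ((t) : x)` be its preimage in `R`. If `x P ⊆ t P`, then `x/t` stabilises the image of `P`
in `R[t⁻¹]`, so it is integral over `R`, hence lies in `R`, i.e. `x̄ = 0`. Otherwise `q x = c t`
with `q ∈ P`, `c ∉ P`; then `q/c` generates the maximal ideal of `R_P`, so `P` has height one and
is minimal over `(t)`. By hypothesis `(R/(t))_P` is then a field, in which the nilpotent `x̄` must
vanish, contradicting that its annihilator is `P`.
-/

open scoped nonZeroDivisors
open IsLocalRing

theorem exists_isNilpotent_isPrime_colon_bot {A : Type*} [CommRing A] [IsNoetherianRing A]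
    (h : ¬ IsReduced A) : ∃ x : A, IsNilpotent x ∧ ((⊥ : Ideal A).colon {x}).IsPrime := by
  obtain ⟨y, hy, hy0⟩ : ∃ y : A, IsNilpotent y ∧ y ≠ 0 := by
    by_contra! hc
    exact h ⟨hc⟩
  obtain ⟨P, hP, -⟩ := exists_le_isAssociatedPrime_of_isNoetherianRing A
    (⟨y, hy⟩ : nilradical A) (Subtype.coe_ne_coe.mp hy0)
  obtain ⟨hPprime, z, rfl⟩ := isAssociatedPrime_iff.mp hP
  refine ⟨z, z.2, ?_⟩
  convert hPprime using 1
  ext r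
  simp [Submodule.mem_colon_singleton, Subtype.ext_iff]

theorem Ideal.comap_quotientMk_colon_bot {R : Type*} [CommRing R] (I : Ideal R) (x : R) :
    ((⊥ : Ideal (R ⧸ I)).colon {Ideal.Quotient.mk I x}).comap (Ideal.Quotient.mk I) =
      I.colon {x} := by
  ext r
  simp [Submodule.mem_colon_singleton, ← map_mul, Ideal.Quotient.eq_zero_iff_mem]

theorem Ideal.mem_span_singleton_of_forall_mul_eq_mul {R S : Type*} [CommRing R]
    [IsNoetherianRing R] [CommRing S] [Algebra R S] {t : R} [IsLocalization.Away t S] (ht : t ∈ R⁰)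
    (hic : ∀ y : S, IsIntegral R y → y ∈ (algebraMap R S).range)
    {P : Ideal R} {x : R} (htP : t ∈ P) (hxP : ∀ q ∈ P, ∃ c ∈ P, q * x = c * t) :
    x ∈ Ideal.span {t} := by
  set y : S := IsLocalization.mk' S x (⟨t, Submonoid.mem_powers t⟩ : Submonoid.powers t)
  have hy : y * algebraMap R S t = algebraMap R S x := IsLocalization.mk'_spec ..
  have hstable : ∀ n, ∀ q ∈ P, ∃ c ∈ P, y ^ n * algebraMap R S q = algebraMap R S c := by
    intro n
    induction n with
    | zero => exact fun q hq ↦ ⟨q, hq, by rw [pow_zero, one_mul]⟩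
    | succ n ih =>
      intro q hq
      obtain ⟨c, hc, hqc⟩ := hxP q hq
      obtain ⟨d, hd, hcd⟩ := ih c hc
      refine ⟨d, hd, ?_⟩
      have hyq : y * algebraMap R S q = algebraMap R S c :=
        (IsLocalization.Away.algebraMap_isUnit t).mul_right_cancel <| by
          rw [mul_right_comm, hy, ← map_mul, ← map_mul, mul_comm, hqc]
      rw [pow_succ, mul_assoc, hyq, hcd]
  have hint : IsIntegral R y := by
    refine IsAlmostIntegral.isIntegral_of_nonZeroDivisors_le_comap ⟨t, ht, fun n ↦ ?_⟩
      (IsLocalization.nonZeroDivisors_le_comap (Submonoid.powers t) S)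
    obtain ⟨c, -, hc⟩ := hstable n t htP
    exact ⟨c, by rw [Algebra.smul_def, mul_comm, hc]⟩
  obtain ⟨r, hr⟩ := hic y hint
  have hinj := IsLocalization.injective S (Submonoid.powers_le.mpr ht)
  refine Ideal.mem_span_singleton'.mpr ⟨r, hinj ?_⟩
  rw [map_mul, hr, hy]

theorem Ideal.eq_span_singleton_of_le_colon {B : Type*} [CommRing B] {I : Ideal B} {e X : B}
    (he : e ∈ I) (heX : e * X ∈ B⁰) (hI : I ≤ (Ideal.span {e * X}).colon {X}) :
    I = Ideal.span {e} := by
  refine le_antisymm (fun b hb ↦ ?_) (Ideal.span_le.mpr (Set.singleton_subset_iff.mpr he))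
  obtain ⟨d, hd⟩ := Ideal.mem_span_singleton'.mp (Submodule.mem_colon_singleton.mp (hI hb))
  have : (b - d * e) * (e * X) = 0 := by linear_combination e * hd.symm
  rw [sub_eq_zero.mp (heX.2 _ this)]
  exact Ideal.mul_mem_left _ _ (Ideal.mem_span_singleton_self e)

theorem Localization.AtPrime.isPrincipal_maximalIdeal_of_mul_eq_mul {R : Type*} [CommRing R]
    (P : Ideal R) [P.IsPrime] {t x q c : R} (ht : t ∈ R⁰) (hPx : ∀ a ∈ P, a * x ∈ Ideal.span {t})
    (hq : q ∈ P) (hc : c ∉ P) (hqc : q * x = c * t) :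
    (maximalIdeal (Localization.AtPrime P)).IsPrincipal := by
  set B := Localization.AtPrime P
  set e : B := IsLocalization.mk' B q (⟨c, hc⟩ : P.primeCompl)
  have heX : e * algebraMap R B x = algebraMap R B t :=
    (IsLocalization.map_units B (⟨c, hc⟩ : P.primeCompl)).mul_right_cancel <| by
      rw [mul_right_comm, IsLocalization.mk'_spec, ← map_mul, ← map_mul, hqc, mul_comm]
  refine ⟨e, Ideal.eq_span_singleton_of_le_colon (X := algebraMap R B x) ?_ ?_ ?_⟩
  · exact (IsLocalization.AtPrime.mk'_mem_maximal_iff B P q _).mpr hq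
  · exact heX ▸ IsLocalization.nonZeroDivisors_le_comap P.primeCompl B ht
  · rw [heX, ← Localization.AtPrime.map_eq_maximalIdeal, Ideal.map_le_iff_le_comap]
    intro a ha
    obtain ⟨d, hd⟩ := Ideal.mem_span_singleton'.mp (hPx a ha)
    rw [Ideal.mem_comap, Submodule.mem_colon_singleton, smul_eq_mul, ← map_mul, ← hd, map_mul]
    exact Ideal.mul_mem_left _ _ (Ideal.mem_span_singleton_self _)

theorem Ideal.height_le_one_of_isPrincipal_maximalIdeal {R : Type*} [CommRing R]
    [IsNoetherianRing R] (P : Ideal R) [P.IsPrime]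
    (hP : (maximalIdeal (Localization.AtPrime P)).IsPrincipal) : P.height ≤ 1 := by
  rw [← IsLocalization.AtPrime.under_maximalIdeal (Localization.AtPrime P) P,
    IsLocalization.height_under P.primeCompl]
  exact (maximalIdeal _).height_le_one_of_isPrincipal_of_mem_minimalPrimes _
    (by rw [Ideal.minimalPrimes_eq_subsingleton_self]; rfl)

theorem Ideal.mem_minimalPrimes_span_singleton_of_height_le_one {R : Type*} [CommRing R]
    [IsNoetherianRing R] {t : R} (ht : t ∈ R⁰) {P : Ideal R} [P.IsPrime] (htP : t ∈ P)
    (hP : P.height ≤ 1) : P ∈ (Ideal.span {t}).minimalPrimes :=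
  Ideal.mem_minimalPrimes_of_height_le (Ideal.span_le.mpr (Set.singleton_subset_iff.mpr htP))
    (hP.trans (Ideal.one_le_height_span_singleton_of_mem_nonZeroDivisors ht))

theorem IsLocalization.exists_mul_eq_zero_of_isNilpotent {A S : Type*} [CommRing A] [CommRing S]
    [Algebra A S] (M : Submonoid A) [IsLocalization M S] [IsReduced S] {x : A}
    (hx : IsNilpotent x) : ∃ m : M, (m : A) * x = 0 :=
  (IsLocalization.map_eq_zero_iff M S x).mp (hx.map (algebraMap A S)).eq_zero

theorem special_fiber_reduced_of_generically_regular_general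
    (R : Type*) [CommRing R] [IsNoetherianRing R]
    (t : R) (ht : t ∈ nonZeroDivisors R)
    (hic : ∀ x : Localization.Away t, IsIntegral R x →
      x ∈ (algebraMap R (Localization.Away t)).range)
    (hgen : ∀ (p : Ideal R) [p.IsPrime], p ∈ (Ideal.span {t}).minimalPrimes →
      IsField (Localization
        (Submonoid.map (Ideal.Quotient.mk (Ideal.span {t})) p.primeCompl))) :
    IsReduced (R ⧸ Ideal.span {t}) := by
  by_contra hred
  obtain ⟨x', hnil, hprime⟩ := exists_isNilpotent_isPrime_colon_bot hred
  obtain ⟨x, rfl⟩ := Ideal.Quotient.mk_surjective x'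
  set P := (Ideal.span {t}).colon {x}
  have hPcomap : ((⊥ : Ideal _).colon {Ideal.Quotient.mk _ x}).comap (Ideal.Quotient.mk _) = P :=
    Ideal.comap_quotientMk_colon_bot _ x
  have : P.IsPrime := hPcomap ▸ hprime.comap _
  have hPx : ∀ a ∈ P, a * x ∈ Ideal.span {t} := fun a ha ↦ Submodule.mem_colon_singleton.mp ha
  have htP : t ∈ P := Submodule.mem_colon_singleton.mpr <|
    Ideal.mul_mem_right _ _ (Ideal.mem_span_singleton_self t)
  by_cases hstable : ∀ q ∈ P, ∃ c ∈ P, q * x = c * t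
  · have hx := Ideal.mem_span_singleton_of_forall_mul_eq_mul ht hic htP hstable
    exact Ideal.IsPrime.ne_top this <| (Ideal.eq_top_iff_one P).mpr <|
      Submodule.mem_colon_singleton.mpr (by rwa [one_smul])
  · push Not at hstable
    obtain ⟨q, hq, hqc⟩ := hstable
    obtain ⟨c, hc⟩ := Ideal.mem_span_singleton'.mp (hPx q hq)
    have hmin : P ∈ (Ideal.span {t}).minimalPrimes :=
      Ideal.mem_minimalPrimes_span_singleton_of_height_le_one ht htP <|
        Ideal.height_le_one_of_isPrincipal_maximalIdeal P <|
          Localization.AtPrime.isPrincipal_maximalIdeal_of_mul_eq_mul P ht hPx hq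
            (fun h ↦ hqc c h hc.symm) hc.symm
    let M := P.primeCompl.map (Ideal.Quotient.mk (Ideal.span {t}))
    let _ := (hgen P hmin).toField
    obtain ⟨⟨_, s, hs, rfl⟩, hsx⟩ :=
      IsLocalization.exists_mul_eq_zero_of_isNilpotent (S := Localization M) M hnil
    exact hs (hPcomap ▸ Submodule.mem_colon_singleton.mpr hsx)

/-- Let `R` be a reduced Noetherian ring with finite normalization, `t` a
non-zero-divisor, `R` integrally closed in `R[t⁻¹]`, and suppose that for every prime
`p` minimal over `(t)` the localization of `R/(t)` at `p` is a field.  Then `R/(t)` is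
reduced. -/
theorem special_fiber_reduced_of_generically_regular
    (R : Type*) [CommRing R] [IsNoetherianRing R] [IsReduced R]
    (hfin : Module.Finite R (integralClosure R (FractionRing R)))
    (t : R) (ht : t ∈ nonZeroDivisors R)
    (hic : ∀ x : Localization.Away t, IsIntegral R x →
      x ∈ (algebraMap R (Localization.Away t)).range)
    (hgen : ∀ (p : Ideal R) [p.IsPrime], p ∈ (Ideal.span {t}).minimalPrimes →
      IsField (Localization
        (Submonoid.map (Ideal.Quotient.mk (Ideal.span {t})) p.primeCompl))) :
    IsReduced (R ⧸ Ideal.span {t}) :=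
  special_fiber_reduced_of_generically_regular_general R t ht hic hgen
end

section
/- Let R be a reduced Noetherian commutative ring, let t ∈ R be a non-zero-divisor, assume R is integrally closed in the localization R[t⁻¹], and let R' denote the integral closure of R in its total ring of fractions. Then R ∩ tR' = tR; equivalently, the natural ring homomorphism R/tR → R'/tR' is injective. (A step in the proof of Lemma 2.5 of the paper.) -/
/-!
If `x = t y` with `y` integral over `R`, then `x / t ∈ R[t⁻¹]` is sent to `y` by the embedding
of `R[t⁻¹]` into the total ring of fractions (`t` is a non-zero-divisor), so it is itself
integral over `R`, hence lies in `R`, i.e. `x ∈ tR`.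
-/

namespace IsLocalization

variable {R : Type*} [CommRing R] {M : Submonoid R} (hM : M ≤ nonZeroDivisors R)
  {S : Type*} [CommRing S] [Algebra R S] [IsLocalization M S]
  (K : Type*) [CommRing K] [Algebra R K] [IsFractionRing R K]

include hM

theorem map_units_of_le_nonZeroDivisors (m : M) : IsUnit (algebraMap R K m) :=
  IsLocalization.map_units K (⟨m, hM m.2⟩ : nonZeroDivisors R)

theorem lift_injective_of_le_nonZeroDivisors :
    Function.Injective (lift (S := S) (map_units_of_le_nonZeroDivisors hM K)) := by
  refine (lift_injective_iff _).2 fun x y => ?_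
  rw [(IsLocalization.injective S hM).eq_iff, (IsFractionRing.injective R K).eq_iff]

theorem exists_mul_mem_integralClosure_iff_mem_span_singleton
    (hic : ∀ s : S, IsIntegral R s → s ∈ (algebraMap R S).range) (m : M) (x : R) :
    (∃ y ∈ integralClosure R K, algebraMap R K x = algebraMap R K m * y) ↔
      x ∈ Ideal.span {(m : R)} := by
  rw [Ideal.mem_span_singleton']
  constructor
  · rintro ⟨y, hy, hxy⟩
    have hlift : lift (map_units_of_le_nonZeroDivisors hM K) (mk' S x m) = y :=
      (lift_mk'_spec _ _ _ _).2 hxy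
    have hint : IsIntegral R (mk' S x m) := by
      rw [← isIntegral_algHom_iff (liftAlgHom (f := Algebra.ofId R K)
        (map_units_of_le_nonZeroDivisors hM K)) (lift_injective_of_le_nonZeroDivisors hM K)]
      exact hlift ▸ hy
    obtain ⟨r, hr⟩ := hic _ hint
    exact ⟨r, IsLocalization.injective S hM <| (map_mul _ _ _).trans (eq_mk'_iff_mul_eq.1 hr)⟩
  · rintro ⟨r, rfl⟩
    exact ⟨algebraMap R K r, isIntegral_algebraMap, by rw [map_mul, mul_comm]⟩

end IsLocalization

theorem inter_t_mul_integralClosure_eq_general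
    (R : Type*) [CommRing R]
    (t : R) (ht : t ∈ nonZeroDivisors R)
    (hic : ∀ x : Localization.Away t, IsIntegral R x →
      x ∈ (algebraMap R (Localization.Away t)).range) :
    ∀ x : R,
      (∃ y ∈ integralClosure R (FractionRing R),
          algebraMap R (FractionRing R) x = algebraMap R (FractionRing R) t * y) ↔
        x ∈ Ideal.span {t} :=
  IsLocalization.exists_mul_mem_integralClosure_iff_mem_span_singleton
    (Submonoid.powers_le.2 ht) (FractionRing R) hic ⟨t, Submonoid.mem_powers t⟩

/-- Let `R` be a reduced Noetherian ring, `t` a non-zero-divisor, and suppose `R` is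
integrally closed in `R[t⁻¹]`.  Let `R'` be the integral closure of `R` in its total
ring of fractions.  Then `R ∩ tR' = tR`: an element `x ∈ R` whose image in the total
ring of fractions lies in `t·R'` already lies in `tR`.  Equivalently, `R/tR → R'/tR'`
is injective. -/
theorem inter_t_mul_integralClosure_eq
    (R : Type*) [CommRing R] [IsNoetherianRing R] [IsReduced R]
    (t : R) (ht : t ∈ nonZeroDivisors R)
    (hic : ∀ x : Localization.Away t, IsIntegral R x →
      x ∈ (algebraMap R (Localization.Away t)).range) :
    ∀ x : R,
      (∃ y ∈ integralClosure R (FractionRing R),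
          algebraMap R (FractionRing R) x = algebraMap R (FractionRing R) t * y) ↔
        x ∈ Ideal.span {t} :=
  inter_t_mul_integralClosure_eq_general R t ht hic
end

section
/- Let B be a commutative ring and let C be a commutative B-algebra that is reduced, Noetherian, finitely generated as a B-algebra, and integral over B. Then the group of B-algebra automorphisms of C is finite. (The affine core of Theorem 4.1 of the paper, which shows the automorphism group scheme of a branchvariety is finite.) -/
lemma finite_roots_aux (B C : Type*) [CommRing B] [CommRing C] [Algebra B C]
    [IsReduced C] [IsNoetherianRing C] (p : Polynomial B) (hp : p.Monic) :
    {x : C | Polynomial.aeval x p = 0}.Finite := by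
  have hfin := minimalPrimes.finite_of_isNoetherianRing C
  haveI : Finite (minimalPrimes C) := hfin
  have hprime : ∀ P ∈ minimalPrimes C, P.IsPrime := fun P hP => hP.1.1
  -- target sets
  have hroot : ∀ P : minimalPrimes C,
      {y : C ⧸ P.1 | Polynomial.IsRoot (p.map (algebraMap B C |>.comp
        (RingHom.id B)) |>.map (Ideal.Quotient.mk P.1)) y}.Finite := by
    intro P
    haveI := hprime P.1 P.2
    apply Polynomial.finite_setOf_isRoot
    exact ((hp.map _).map _).ne_zero
  haveI : ∀ P : minimalPrimes C, Finite
      {y : C ⧸ P.1 | Polynomial.IsRoot ((p.map (algebraMap B C |>.comp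
        (RingHom.id B))).map (Ideal.Quotient.mk P.1)) y} := fun P => (hroot P).to_subtype
  rw [Set.finite_coe_iff.symm]
  refine Finite.of_injective (fun x => fun P : minimalPrimes C =>
    (⟨Ideal.Quotient.mk P.1 x.1, ?_⟩ : {y : C ⧸ P.1 | Polynomial.IsRoot ((p.map (algebraMap B C |>.comp
        (RingHom.id B))).map (Ideal.Quotient.mk P.1)) y})) ?_
  · have hx := x.2
    simp only [Set.mem_setOf_eq] at hx ⊢
    have : Polynomial.eval₂ ((Ideal.Quotient.mk P.1).comp ((algebraMap B C).comp (RingHom.id B))) (Ideal.Quotient.mk P.1 x.1) p = 0 := by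
      rw [← Polynomial.hom_eval₂, RingHom.comp_id,
        show Polynomial.eval₂ (algebraMap B C) x.1 p = Polynomial.aeval x.1 p from rfl, hx,
        map_zero]
    simpa [Polynomial.IsRoot, Polynomial.eval_map, Polynomial.eval₂_map] using this
  · intro x y h
    have hxy : ∀ P ∈ minimalPrimes C, x.1 - y.1 ∈ P := by
      intro P hP
      have := congrFun h ⟨P, hP⟩
      have : Ideal.Quotient.mk P x.1 = Ideal.Quotient.mk P y.1 := congrArg Subtype.val this
      rwa [Ideal.Quotient.mk_eq_mk_iff_sub_mem] at this
    have : x.1 - y.1 ∈ sInf ((⊥ : Ideal C).minimalPrimes) := by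
      rw [Ideal.mem_sInf]; intro P hP; exact hxy P hP
    rw [Ideal.sInf_minimalPrimes] at this
    have h2 : x.1 - y.1 ∈ nilradical C := this
    rw [nilradical_eq_zero] at h2
    simp only [Ideal.zero_eq_bot, Ideal.mem_bot, sub_eq_zero] at h2
    exact Subtype.ext h2

/-- Let `B` be a commutative ring and `C` a commutative `B`-algebra that is reduced,
Noetherian, finitely generated as a `B`-algebra, and integral over `B`.  Then the group
of `B`-algebra automorphisms of `C` is finite. -/
theorem finite_algAut_of_integral
    (B C : Type*) [CommRing B] [CommRing C] [Algebra B C]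
    [IsReduced C] [IsNoetherianRing C] [Algebra.FiniteType B C] [Algebra.IsIntegral B C] :
    Finite (C ≃ₐ[B] C) := by
  obtain ⟨s, hs⟩ := Algebra.FiniteType.out (R := B) (A := C)
  choose p hmonic hroot using fun x : s => (Algebra.IsIntegral.isIntegral (R := B) x.1)
  haveI : ∀ x : s, Finite {y : C | Polynomial.aeval y (p x) = 0} := fun x =>
    (finite_roots_aux B C (p x) (hmonic x)).to_subtype
  refine Finite.of_injective (fun σ => fun x : s =>
    (⟨σ x.1, ?_⟩ : {y : C | Polynomial.aeval y (p x) = 0})) ?_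
  · simp only [Set.mem_setOf_eq]
    rw [show σ x.1 = (σ : C →ₐ[B] C) x.1 from rfl, Polynomial.aeval_algHom_apply]
    rw [show Polynomial.aeval x.1 (p x) = Polynomial.eval₂ (algebraMap B C) x.1 (p x) from rfl,
      hroot x, map_zero]
  · intro σ τ h
    have : (σ : C →ₐ[B] C) = (τ : C →ₐ[B] C) := by
      apply AlgHom.ext_of_adjoin_eq_top hs
      intro x hx
      exact congrArg Subtype.val (congrFun h ⟨x, hx⟩)
    exact AlgEquiv.coe_algHom_injective this
end

section
/- Let C be a reduced Noetherian commutative ring and let p be a monic polynomial with coefficients in C. Then the set of roots of p in C, i.e. {x ∈ C : p(x) = 0}, is finite. (A claim used in the proof of Theorem 4.1 of the paper: a reduced Noetherian ring embeds into a finite product of fields, and a monic polynomial has finitely many roots in each field.) -/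
/-- Let `C` be a reduced Noetherian commutative ring and `p` a monic polynomial over
`C`.  Then the set of roots of `p` in `C` is finite. -/
theorem finite_roots_of_monic_of_reduced
    (C : Type*) [CommRing C] [IsReduced C] [IsNoetherianRing C]
    (p : Polynomial C) (hp : p.Monic) :
    {x : C | Polynomial.eval x p = 0}.Finite := by
  have hmin : (minimalPrimes C).Finite := minimalPrimes.finite_of_isNoetherianRing C
  haveI : Finite (minimalPrimes C) := hmin
  have hprime : ∀ I : minimalPrimes C, (I : Ideal C).IsPrime := fun I => I.2.1.1
  -- the map into the product of quotients by minimal primes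
  set f : C → ∀ I : minimalPrimes C, C ⧸ (I : Ideal C) :=
    fun x I => Ideal.Quotient.mk (I : Ideal C) x with hf
  have hinj : Function.Injective f := by
    intro x y hxy
    have h : x - y ∈ sInf (minimalPrimes C) := by
      rw [Ideal.mem_sInf]
      intro I hI
      have := congrFun hxy ⟨I, hI⟩
      simpa [f, Ideal.Quotient.eq] using this
    rw [show minimalPrimes C = (⊥ : Ideal C).minimalPrimes from rfl,
      Ideal.sInf_minimalPrimes] at h
    have h2 : x - y ∈ nilradical C := h
    rw [nilradical_eq_zero] at h2
    simpa [sub_eq_zero] using h2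
  refine Set.Finite.of_finite_image ?_ hinj.injOn
  refine Set.Finite.subset (Set.Finite.pi (fun I : minimalPrimes C =>
    Polynomial.finite_setOf_isRoot (p := p.map (Ideal.Quotient.mk (I : Ideal C)))
      ?_)) ?_
  · haveI := hprime I
    exact (hp.map _).ne_zero
  · rintro _ ⟨x, hx, rfl⟩
    intro I _
    haveI := hprime I
    simp only [Set.mem_setOf_eq, Polynomial.IsRoot]
    rw [hf, Polynomial.eval_map, Polynomial.eval₂_hom, hx, map_zero]
end

section
/- Let A be a discrete valuation ring with uniformizer t and fraction field K, let S be a commutative K-algebra, and let g : A[X₀,…,Xₙ] → S be an A-algebra homomorphism such that S is finitely generated as a module over the image of the induced K-algebra homomorphism K[X₀,…,Xₙ] → S. Then there exists an A-subalgebra R of S containing the image of g such that R is finitely generated as a module over the image subring g(A[X₀,…,Xₙ]) and such that for every s ∈ S there exists k ≥ 0 with tᵏ·s ∈ R. In particular R is torsion-free, hence flat, over A, and S is recovered from R by inverting t. (The existence-of-a-flat-extension step in the proof of Theorem 3.5 of the paper, the properness of the functor of branchvarieties.) -/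
/-!
Since `K = A[1/t]`, a power of `t` carries every element of the `K`-image of `g` into
`G = g.range`; hence if `y₁, …, y_r` generate `S` over that image, a power of `t` carries every
`s ∈ S` into `G y₁ + ⋯ + G y_r`. Replacing the `yᵢ` by `t ^ M yᵢ` for `M` large enough to absorb
the denominators of the products `yᵢ yⱼ` makes `G + G t ^ M y₁ + ⋯ + G t ^ M y_r` a ring, which is
the required `R`.
-/

open Submodule Pointwise

theorem Submodule.exists_pow_smul_add_mem {R M : Type*} [CommSemiring R] [AddCommMonoid M]
    [Module R M] (N : Submodule R M) (r : R) {x y : M} (hx : ∃ k : ℕ, r ^ k • x ∈ N)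
    (hy : ∃ k : ℕ, r ^ k • y ∈ N) : ∃ k : ℕ, r ^ k • (x + y) ∈ N := by
  obtain ⟨k, hk⟩ := hx
  obtain ⟨l, hl⟩ := hy
  refine ⟨k + l, ?_⟩
  rw [show r ^ (k + l) • (x + y) = r ^ l • r ^ k • x + r ^ k • r ^ l • y by
    rw [smul_smul, smul_smul, ← pow_add, ← pow_add, add_comm l k, smul_add]]
  exact N.add_mem (N.smul_mem _ hk) (N.smul_mem _ hl)

theorem IsDiscreteValuationRing.exists_pow_smul_eq_algebraMap {A K : Type*} [CommRing A]
    [IsDomain A] [IsDiscreteValuationRing A] [CommRing K] [Algebra A K] [IsFractionRing A K]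
    {t : A} (ht : Irreducible t) (x : K) : ∃ (m : ℕ) (a : A), t ^ m • x = algebraMap A K a := by
  obtain ⟨⟨b, hb⟩, a, ha⟩ := IsLocalization.exists_integer_multiple (nonZeroDivisors A) x
  obtain ⟨m, u, rfl⟩ :=
    IsDiscreteValuationRing.eq_unit_mul_pow_irreducible (nonZeroDivisors.ne_zero hb) ht
  refine ⟨m, ↑u⁻¹ * a, ?_⟩
  rw [map_mul, ha, ← Algebra.smul_def, smul_smul, ← mul_assoc, Units.inv_mul, one_mul]

theorem MvPolynomial.exists_pow_smul_aeval_mem {σ A K S : Type*} [CommRing A] [CommRing K]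
    [Algebra A K] [CommRing S] [Algebra K S] [Algebra A S] [IsScalarTower A K S]
    (G : Subalgebra A S) {t : A} (hK : ∀ x : K, ∃ (m : ℕ) (a : A), t ^ m • x = algebraMap A K a)
    {f : σ → S} (hf : ∀ i, f i ∈ G) (p : MvPolynomial σ K) :
    ∃ m : ℕ, t ^ m • aeval f p ∈ G := by
  induction p using MvPolynomial.induction_on with
  | C a =>
    obtain ⟨m, a', ha'⟩ := hK a
    refine ⟨m, ?_⟩
    rw [aeval_C, Algebra.smul_def, IsScalarTower.algebraMap_apply A K S, ← map_mul,
      ← Algebra.smul_def, ha', ← IsScalarTower.algebraMap_apply]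
    exact G.algebraMap_mem a'
  | add p q hp hq =>
    rw [map_add]
    exact (Subalgebra.toSubmodule G).exists_pow_smul_add_mem t hp hq
  | mul_X p i hp =>
    obtain ⟨m, hm⟩ := hp
    refine ⟨m, ?_⟩
    rw [map_mul, aeval_X, ← smul_mul_assoc]
    exact G.mul_mem hm (hf i)

section

variable {R S : Type*} [CommRing R] [CommRing S] [Algebra R S]

theorem exists_pow_smul_mem_span_of_span_eq_top {B : Type*} [CommRing B] [Algebra B S] (τ : R)
    (hB : ∀ b : B, ∃ (m : ℕ) (r : R), τ ^ m • algebraMap B S b = algebraMap R S r)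
    {Y : Set S} (hY : span B Y = ⊤) (x : S) : ∃ k : ℕ, τ ^ k • x ∈ span R Y := by
  have hx : x ∈ span B Y := hY ▸ mem_top
  induction hx using span_induction with
  | mem y hy => exact ⟨0, by simpa using subset_span hy⟩
  | zero => exact ⟨0, by simp⟩
  | add x y _ _ hx hy => exact (span R Y).exists_pow_smul_add_mem τ hx hy
  | smul b x _ hx =>
    obtain ⟨k, hk⟩ := hx
    obtain ⟨m, r, hr⟩ := hB b
    refine ⟨m + k, ?_⟩
    rw [Algebra.smul_def b x, pow_add, ← smul_mul_smul_comm, hr, ← Algebra.smul_def]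
    exact smul_mem _ r hk

/-- Scaling the generators by `τ ^ M`, where `M` bounds the exponents needed to bring their
pairwise products back into the span, makes the span closed under multiplication. -/
theorem exists_subalgebra_eq_span_of_forall_pow_smul_mem_span (τ : R) (Y : Finset S)
    (hY : ∀ x : S, ∃ k : ℕ, τ ^ k • x ∈ span R (Y : Set S)) :
    ∃ (T : Subalgebra R S) (s : Finset S), Subalgebra.toSubmodule T = span R s ∧
      ∀ x : S, ∃ k : ℕ, τ ^ k • x ∈ T := by
  classical
  choose k hk using hY
  obtain ⟨M, hM⟩ : ∃ M, M = (Y ×ˢ Y).sup fun p => k (p.1 * p.2) := ⟨_, rfl⟩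
  obtain ⟨s, hs⟩ : ∃ s : Finset S, s = insert 1 (τ ^ M • Y) := ⟨_, rfl⟩
  have hs' : (s : Set S) = insert 1 (τ ^ M • (Y : Set S)) := by
    rw [hs, Finset.coe_insert, Finset.coe_smul_finset]
  have hscale : ∀ x ∈ span R (Y : Set S), τ ^ M • x ∈ span R (s : Set S) := by
    intro x hx
    have hmem := smul_mem_pointwise_smul x (τ ^ M) _ hx
    rw [smul_span] at hmem
    exact span_mono (hs' ▸ Set.subset_insert _ _) hmem
  have hmul : span R (s : Set S) * span R s ≤ span R s := by
    rw [span_mul_span, span_le]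
    rintro _ ⟨a, ha, b, hb, rfl⟩
    rcases hs' ▸ ha with rfl | ⟨y, hy, rfl⟩
    · simpa using subset_span hb
    rcases hs' ▸ hb with rfl | ⟨z, hz, rfl⟩
    · simpa using subset_span ha
    have hyz : k (y * z) ≤ M :=
      hM ▸ Finset.le_sup (f := fun p => k (p.1 * p.2)) (b := (y, z)) (Finset.mem_product.2 ⟨hy, hz⟩)
    change τ ^ M • y * τ ^ M • z ∈ span R (s : Set S)
    rw [show (τ ^ M • y) * (τ ^ M • z) = τ ^ (M - k (y * z)) • τ ^ M • τ ^ k (y * z) • (y * z) by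
      rw [smul_mul_smul_comm, smul_smul, smul_smul, ← pow_add, ← pow_add, ← pow_add]
      congr 2
      omega]
    exact smul_mem _ _ (hscale _ (hk _))
  refine ⟨(span R (s : Set S)).toSubalgebra (subset_span (by simp [hs]))
    (fun x y hx hy => hmul (mul_mem_mul hx hy)), s, toSubalgebra_toSubmodule ..,
    fun x => ⟨k x + M, ?_⟩⟩
  rw [pow_add, mul_comm, mul_smul]
  exact hscale _ (hk x)

end

/-- Let `A` be a DVR with uniformizer `t` and fraction field `K`, `S` a commutative
`K`-algebra, and `g : A[X₀,…,Xₙ] → S` an `A`-algebra homomorphism such that `S` is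
finite as a module over the image of the induced map `K[X₀,…,Xₙ] → S`.  Then there is
an `A`-subalgebra `R` of `S` containing the image of `g`, finitely generated as a
module over the image of `g`, and such that every `s ∈ S` satisfies `t ^ k • s ∈ R`
for some `k`. -/
theorem exists_flat_extension_over_dvr
    (A : Type*) [CommRing A] [IsDomain A] [IsDiscreteValuationRing A]
    (t : A) (ht : Irreducible t)
    (S : Type*) [CommRing S] [Algebra (FractionRing A) S]
    [Algebra A S] [IsScalarTower A (FractionRing A) S]
    (n : ℕ) (g : MvPolynomial (Fin (n + 1)) A →ₐ[A] S)
    (hfin : Module.Finite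
      ↥(MvPolynomial.aeval (R := FractionRing A)
          (fun i : Fin (n + 1) => g (MvPolynomial.X i))).range S) :
    ∃ R : Subalgebra A S,
      g.range ≤ R ∧
      (∃ s : Finset S, ↑s ⊆ (R : Set S) ∧
        (R : Set S) ⊆ (Submodule.span ↥g.range (↑s : Set S) : Set S)) ∧
      ∀ x : S, ∃ k : ℕ, algebraMap A S t ^ k * x ∈ R := by
  obtain ⟨Y, hY⟩ := hfin.fg_top
  have hB : ∀ b : (MvPolynomial.aeval (R := FractionRing A)
      (fun i : Fin (n + 1) => g (MvPolynomial.X i))).range,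
      ∃ (m : ℕ) (r : g.range),
        algebraMap A g.range t ^ m • algebraMap _ S b = algebraMap _ S r := by
    rintro ⟨_, p, rfl⟩
    obtain ⟨m, hm⟩ := MvPolynomial.exists_pow_smul_aeval_mem g.range
      (IsDiscreteValuationRing.exists_pow_smul_eq_algebraMap ht)
      (fun i => ⟨MvPolynomial.X i, rfl⟩) p
    exact ⟨m, ⟨_, hm⟩, by rw [← map_pow, algebraMap_smul]; rfl⟩
  obtain ⟨T, s, hTs, hT⟩ := exists_subalgebra_eq_span_of_forall_pow_smul_mem_span _ Y
    (exists_pow_smul_mem_span_of_span_eq_top _ hB hY)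
  have hTs' : (T : Set S) = span g.range (s : Set S) := congrArg SetLike.coe hTs
  refine ⟨T.restrictScalars A, fun x hx => T.algebraMap_mem ⟨x, hx⟩,
    ⟨s, hTs' ▸ subset_span, hTs'.subset⟩, fun x => ?_⟩
  obtain ⟨k, hk⟩ := hT x
  refine ⟨k, ?_⟩
  rwa [← map_pow, algebraMap_smul, Algebra.smul_def, map_pow] at hk
end
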